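/- arXiv:1306.1974 — 6 statements merged into one kernel-verified Lean document; each statement's English description precedes it below -/
import Mathlib

section
/- Let S be a semigroup of complex n×n matrices, each of which is a partial isometry in the block form guaranteed by the structure theorem: each T ∈ S is an m×m block matrix with k×k blocks, each nonzero block a unitary matrix, and at most one nonzero block in each block row and each block column. Then every idempotent in S is a block-diagonal matrix whose diagonal blocks are either 0 or the k×k identity, and consequently any two idempotents in S commute. -/
/-!
View an idempotent `P` of this block form as an `m × m` matrix over the ring of `k × k`
matrices. If an off-diagonal block `P_ij` were nonzero, it would be the only nonzero block of
its row, so `P_ij = (P²)_ij = P_ij P_jj`; then `P_jj ≠ 0` shares the block column `j` with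
`P_ij`, which is impossible. So `P` is block diagonal, each diagonal block is an idempotent that
is either `0` or unitary, and an invertible idempotent is the identity. Matrices that are block
diagonal with blocks `0` and `1` commute.
-/

open Matrix

/-- The `(i, j)` block (a `k × k` matrix) of an `m × m` block matrix with
`k × k` blocks. -/
def blk {m k : ℕ} (T : Matrix (Fin m × Fin k) (Fin m × Fin k) ℂ) (i j : Fin m) :
    Matrix (Fin k) (Fin k) ℂ :=
  Matrix.of fun a b => T (i, a) (j, b)

/-- `T` is an `m × m` block matrix with `k × k` blocks in which every nonzero block
is unitary and every block row and every block column contains at most one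
nonzero block. -/
def GoodBlockForm {m k : ℕ} (T : Matrix (Fin m × Fin k) (Fin m × Fin k) ℂ) : Prop :=
  (∀ i j, blk T i j = 0 ∨ ((blk T i j)ᴴ * blk T i j = 1 ∧ blk T i j * (blk T i j)ᴴ = 1)) ∧
  (∀ i j j', blk T i j ≠ 0 → blk T i j' ≠ 0 → j = j') ∧
  (∀ i i' j, blk T i j ≠ 0 → blk T i' j ≠ 0 → i = i')

namespace Matrix

variable {ι R : Type*} [Fintype ι] [NonUnitalNonAssocSemiring R]

theorem isDiag_of_isIdempotentElem {M : Matrix ι ι R}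
    (hrow : ∀ i j j', M i j ≠ 0 → M i j' ≠ 0 → j = j')
    (hcol : ∀ i i' j, M i j ≠ 0 → M i' j ≠ 0 → i = i')
    (hM : IsIdempotentElem M) : M.IsDiag := by
  intro i j hij
  by_contra hne
  have hsum : M i j = M i j * M j j := by
    conv_lhs => rw [← hM.eq, mul_apply]
    refine Fintype.sum_eq_single j fun l hl => ?_
    rw [not_ne_iff.mp (mt (hrow i l j · hne) hl), zero_mul]
  have hjj : M j j ≠ 0 := fun h => hne (by rwa [h, mul_zero] at hsum)
  exact hij (hcol i j j hne hjj)

variable [DecidableEq ι]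

theorem IsDiag.isIdempotentElem_apply_self {M : Matrix ι ι R} (hd : M.IsDiag)
    (hM : IsIdempotentElem M) (i : ι) : IsIdempotentElem (M i i) := by
  rw [IsIdempotentElem, ← hd.diagonal_diag, diagonal_mul_diagonal] at hM
  exact congrFun (diagonal_injective hM) i

theorem IsDiag.commute {M N : Matrix ι ι R} (hM : M.IsDiag) (hN : N.IsDiag)
    (h : ∀ i, Commute (M i i) (N i i)) : Commute M N := by
  rw [← hM.diagonal_diag, ← hN.diagonal_diag]
  change diagonal _ * diagonal _ = diagonal _ * diagonal _
  rw [diagonal_mul_diagonal, diagonal_mul_diagonal]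
  exact congrArg diagonal (funext fun i => (h i).eq)

end Matrix

section Blocks

variable {m k : ℕ}

-- `of (blk T)` is definitionally `(compRingEquiv (Fin m) (Fin k) ℂ).symm T`.
theorem of_blk_mul (A B : Matrix (Fin m × Fin k) (Fin m × Fin k) ℂ) :
    of (blk (A * B)) = of (blk A) * of (blk B) :=
  map_mul (compRingEquiv (Fin m) (Fin k) ℂ).symm A B

theorem Commute.of_blk {A B : Matrix (Fin m × Fin k) (Fin m × Fin k) ℂ}
    (h : Commute (of (blk A)) (of (blk B))) : Commute A B :=
  h.map (compRingEquiv (Fin m) (Fin k) ℂ)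

theorem IsIdempotentElem.of_blk {T : Matrix (Fin m × Fin k) (Fin m × Fin k) ℂ}
    (h : IsIdempotentElem T) : IsIdempotentElem (of (blk T)) := by
  rw [IsIdempotentElem, ← of_blk_mul, h.eq]

namespace GoodBlockForm

variable {T : Matrix (Fin m × Fin k) (Fin m × Fin k) ℂ}

theorem isDiag_of_isIdempotentElem (hT : GoodBlockForm T) (hidem : IsIdempotentElem T) :
    (of (blk T)).IsDiag :=
  Matrix.isDiag_of_isIdempotentElem hT.2.1 hT.2.2 hidem.of_blk

theorem blk_self_eq_zero_or_one (hT : GoodBlockForm T) (hidem : IsIdempotentElem T) (i : Fin m) :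
    blk T i i = 0 ∨ blk T i i = 1 :=
  (hT.1 i i).imp_right fun hunitary => by
    have hunit : IsUnit (blk T i i) := ⟨⟨_, _, hunitary.2, hunitary.1⟩, rfl⟩
    exact (IsIdempotentElem.iff_eq_one_of_isUnit hunit).mp
      ((hT.isDiag_of_isIdempotentElem hidem).isIdempotentElem_apply_self hidem.of_blk i)

end GoodBlockForm

end Blocks

theorem stmt4_general {m k : ℕ} (S : Set (Matrix (Fin m × Fin k) (Fin m × Fin k) ℂ))
    (hform : ∀ T ∈ S, GoodBlockForm T) :
    (∀ P ∈ S, P * P = P →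
      (∀ i j : Fin m, i ≠ j → blk P i j = 0) ∧
      (∀ i : Fin m, blk P i i = 0 ∨ blk P i i = 1)) ∧
    (∀ P ∈ S, ∀ Q ∈ S, P * P = P → Q * Q = Q → P * Q = Q * P) := by
  have zero_or_one := fun P (hP : P ∈ S) (hidem : P * P = P) =>
    (hform P hP).blk_self_eq_zero_or_one hidem
  refine ⟨fun P hP hidem => ⟨fun i j hij => (hform P hP).isDiag_of_isIdempotentElem hidem hij,
    zero_or_one P hP hidem⟩, fun P hP Q hQ hPidem hQidem => ?_⟩
  refine Commute.of_blk <| ((hform P hP).isDiag_of_isIdempotentElem hPidem).commute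
    ((hform Q hQ).isDiag_of_isIdempotentElem hQidem) fun i => ?_
  change Commute (blk P i i) (blk Q i i)
  rcases zero_or_one P hP hPidem i with h | h
  · exact h ▸ Commute.zero_left _
  · exact h ▸ Commute.one_left _

/-- In a semigroup of block partial isometries of the above form, every idempotent
is block diagonal with diagonal blocks `0` or `I_k`, and hence any two idempotents
commute. -/
theorem stmt4 {m k : ℕ} (S : Set (Matrix (Fin m × Fin k) (Fin m × Fin k) ℂ))
    (hmul : ∀ A ∈ S, ∀ B ∈ S, A * B ∈ S)
    (hform : ∀ T ∈ S, GoodBlockForm T) :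
    (∀ P ∈ S, P * P = P →
      (∀ i j : Fin m, i ≠ j → blk P i j = 0) ∧
      (∀ i : Fin m, blk P i i = 0 ∨ blk P i i = 1)) ∧
    (∀ P ∈ S, ∀ Q ∈ S, P * P = P → Q * Q = Q → P * Q = Q * P) :=
  stmt4_general S hform
end

section
/- Let T be an mk×mk complex matrix written as an m×m block matrix with k×k blocks, such that each nonzero block is unitary and each block row and each block column contains at most one nonzero block. Then T is a partial isometry, and σ(T) ⊆ {0} ∪ 𝕋. -/
/-!
The block shape is preserved by products and adjoints: in a product the partial injections of
block indices compose and the unitary blocks multiply. For such `A`, `Aᴴ * A` is the diagonal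
projection onto the block columns carrying a nonzero block, so `T` is a partial isometry.
The same holds for every power `T ^ n`; as there are only finitely many such projections,
`(T ^ n)ᴴ * T ^ n = (T ^ n')ᴴ * T ^ n'` for some `n ≠ n'`. Evaluated at an eigenvector with
eigenvalue `μ` this gives `‖μ‖ ^ (2 * n) = ‖μ‖ ^ (2 * n')`, hence `μ = 0` or `‖μ‖ = 1`.
-/

open Matrix

/-- `T` is a partial isometry: both `Tᴴ * T` and `T * Tᴴ` are orthogonal
projections. -/
def IsPartialIsometry {N : Type*} [Fintype N] [DecidableEq N]
    (T : Matrix N N ℂ) : Prop :=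
  (Tᴴ * T) * (Tᴴ * T) = Tᴴ * T ∧ (Tᴴ * T)ᴴ = Tᴴ * T ∧
  (T * Tᴴ) * (T * Tᴴ) = T * Tᴴ ∧ (T * Tᴴ)ᴴ = T * Tᴴ

theorem spectrum_subset_of_conjTranspose_mul_self_pow_eq {N : Type*} [Fintype N]
    [DecidableEq N] {T : Matrix N N ℂ} {n n' : ℕ} (hne : n ≠ n')
    (hgram : (T ^ n)ᴴ * T ^ n = (T ^ n')ᴴ * T ^ n') :
    spectrum ℂ T ⊆ {0} ∪ {z : ℂ | ‖z‖ = 1} := by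
  intro μ hμ
  rcases eq_or_ne μ 0 with rfl | hμ0
  · exact Or.inl rfl
  right
  rw [← spectrum_toLin', ← Module.End.hasEigenvalue_iff_mem_spectrum] at hμ
  obtain ⟨v, hv⟩ := hμ.exists_hasEigenvector
  have hv0 : star v ⬝ᵥ v ≠ 0 := by
    open ComplexOrder in exact dotProduct_star_self_eq_zero.not.2 hv.2
  have hquad (j : ℕ) :
      star v ⬝ᵥ ((T ^ j)ᴴ * T ^ j) *ᵥ v = (‖μ‖ ^ (2 * j) : ℂ) * (star v ⬝ᵥ v) := by
    have hTj : T ^ j *ᵥ v = μ ^ j • v := by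
      simpa [← Matrix.toLin'_pow, toLin'_apply] using hv.pow_apply j
    rw [← mulVec_mulVec, dotProduct_mulVec, ← star_mulVec, hTj, star_smul, smul_dotProduct,
      dotProduct_smul, smul_smul, smul_eq_mul, star_pow, ← mul_pow, Complex.star_def,
      Complex.conj_mul', pow_mul]
  have hpow : ‖μ‖ ^ (2 * n) = ‖μ‖ ^ (2 * n') := by
    have h := hquad n
    rw [hgram, hquad n'] at h
    exact_mod_cast (mul_right_cancel₀ hv0 h).symm
  by_contra h1
  exact hne (by simpa using (pow_right_inj₀ (norm_pos_iff.2 hμ0) h1).1 hpow)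

variable {m k : ℕ} {A B T : Matrix (Fin m × Fin k) (Fin m × Fin k) ℂ}

lemma blk_conjTranspose (T : Matrix (Fin m × Fin k) (Fin m × Fin k) ℂ) (i j : Fin m) :
    blk Tᴴ i j = (blk T j i)ᴴ :=
  rfl

lemma blk_mul (A B : Matrix (Fin m × Fin k) (Fin m × Fin k) ℂ) (i j : Fin m) :
    blk (A * B) i j = ∑ l, blk A i l * blk B l j := by
  ext a b
  simp only [blk, of_apply, mul_apply, Matrix.sum_apply]
  exact Fintype.sum_prod_type _

def colSupport (A : Matrix (Fin m × Fin k) (Fin m × Fin k) ℂ) : Set (Fin m) :=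
  {j | ∃ i, blk A i j ≠ 0}

namespace GoodBlockForm

lemma blk_mem_unitary (hA : GoodBlockForm A) {i j : Fin m} (h : blk A i j ≠ 0) :
    blk A i j ∈ unitary (Matrix (Fin k) (Fin k) ℂ) :=
  (hA.1 i j).resolve_left h

lemma exists_blk_mul_eq (hA : GoodBlockForm A) {i j : Fin m} (h : blk (A * B) i j ≠ 0) :
    ∃ l, blk A i l ≠ 0 ∧ blk B l j ≠ 0 ∧ blk (A * B) i j = blk A i l * blk B l j := by
  rw [blk_mul] at h
  obtain ⟨l, -, hl⟩ := Finset.exists_ne_zero_of_sum_ne_zero h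
  have hAl : blk A i l ≠ 0 := left_ne_zero_of_mul hl
  refine ⟨l, hAl, right_ne_zero_of_mul hl, ?_⟩
  rw [blk_mul]
  refine Finset.sum_eq_single l (fun l' _ hne => ?_) (by simp)
  rw [not_ne_iff.1 (mt (hA.2.1 i l' l · hAl) hne), zero_mul]

protected lemma mul (hA : GoodBlockForm A) (hB : GoodBlockForm B) : GoodBlockForm (A * B) := by
  refine ⟨fun i j => or_iff_not_imp_left.2 fun h => ?_, fun i j j' h h' => ?_,
    fun i i' j h h' => ?_⟩
  · obtain ⟨l, hAl, hBl, heq⟩ := hA.exists_blk_mul_eq h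
    rw [heq]
    exact mul_mem (hA.blk_mem_unitary hAl) (hB.blk_mem_unitary hBl)
  · obtain ⟨l, hAl, hBl, -⟩ := hA.exists_blk_mul_eq h
    obtain ⟨l', hAl', hBl', -⟩ := hA.exists_blk_mul_eq h'
    obtain rfl := hA.2.1 i l l' hAl hAl'
    exact hB.2.1 l j j' hBl hBl'
  · obtain ⟨l, hAl, hBl, -⟩ := hA.exists_blk_mul_eq h
    obtain ⟨l', hAl', hBl', -⟩ := hA.exists_blk_mul_eq h'
    obtain rfl := hB.2.2 l l' j hBl hBl'
    exact hA.2.2 i i' l hAl hAl'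

protected lemma pow_succ (hT : GoodBlockForm T) (n : ℕ) : GoodBlockForm (T ^ (n + 1)) := by
  induction n with
  | zero => simpa using hT
  | succ n ih => rw [pow_succ]; exact ih.mul hT

protected lemma conjTranspose (hT : GoodBlockForm T) : GoodBlockForm Tᴴ := by
  refine ⟨fun i j => ?_, fun i j j' h h' => hT.2.2 j j' i ?_ ?_,
    fun i i' j h h' => hT.2.1 j i i' ?_ ?_⟩
  · rw [blk_conjTranspose]
    exact (hT.1 j i).imp (fun h => by rw [h, conjTranspose_zero])
      Unitary.star_mem
  · simpa [blk_conjTranspose] using h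
  · simpa [blk_conjTranspose] using h'
  · simpa [blk_conjTranspose] using h
  · simpa [blk_conjTranspose] using h'

open Classical in
lemma blk_conjTranspose_mul_self (hA : GoodBlockForm A) (j j' : Fin m) :
    blk (Aᴴ * A) j j' = if j = j' ∧ j ∈ colSupport A then 1 else 0 := by
  simp only [blk_mul, blk_conjTranspose]
  split_ifs with h
  · obtain ⟨rfl, i₀, hi₀⟩ := h
    rw [Finset.sum_eq_single i₀ (fun i _ hne => ?_) (by simp)]
    · exact (hA.blk_mem_unitary hi₀).1
    · rw [not_ne_iff.1 (mt (hA.2.2 i i₀ j · hi₀) hne), conjTranspose_zero, zero_mul]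
  · refine Finset.sum_eq_zero fun i _ => ?_
    by_cases hij : blk A i j = 0
    · rw [hij, conjTranspose_zero, zero_mul]
    have hij' : blk A i j' = 0 := by
      by_contra h'
      exact h ⟨hA.2.1 i j j' hij h', i, hij⟩
    rw [hij', mul_zero]

open Classical in
lemma conjTranspose_mul_self_eq_diagonal (hA : GoodBlockForm A) :
    Aᴴ * A = diagonal fun p => if p.1 ∈ colSupport A then 1 else 0 := by
  ext ⟨j, a⟩ ⟨j', b⟩
  have h := congrFun₂ (hA.blk_conjTranspose_mul_self j j') a b
  change blk (Aᴴ * A) j j' a b = _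
  rw [h, diagonal_apply]
  obtain rfl | hj := eq_or_ne j j'
  · by_cases hc : j ∈ colSupport A <;> simp [hc, one_apply]
  · simp [hj]

lemma isIdempotentElem_conjTranspose_mul_self (hA : GoodBlockForm A) :
    IsIdempotentElem (Aᴴ * A) := by
  classical
  rw [IsIdempotentElem, hA.conjTranspose_mul_self_eq_diagonal, diagonal_mul_diagonal]
  congr 1
  ext p
  split_ifs <;> simp

lemma isPartialIsometry (hT : GoodBlockForm T) : IsPartialIsometry T := by
  have h := hT.conjTranspose.isIdempotentElem_conjTranspose_mul_self
  rw [conjTranspose_conjTranspose] at h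
  exact ⟨hT.isIdempotentElem_conjTranspose_mul_self, (isHermitian_conjTranspose_mul_self T).eq, h,
    (isHermitian_mul_conjTranspose_self T).eq⟩

lemma exists_conjTranspose_mul_self_pow_eq (hT : GoodBlockForm T) :
    ∃ n n', n ≠ n' ∧ (T ^ n)ᴴ * T ^ n = (T ^ n')ᴴ * T ^ n' := by
  obtain ⟨n, n', hne, h⟩ := Finite.exists_ne_map_eq_of_infinite fun n => colSupport (T ^ (n + 1))
  refine ⟨n + 1, n' + 1, by omega, ?_⟩
  rw [(hT.pow_succ n).conjTranspose_mul_self_eq_diagonal,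
    (hT.pow_succ n').conjTranspose_mul_self_eq_diagonal, h]

end GoodBlockForm

/-- A matrix of the above block form is a partial isometry and its spectrum is
contained in `{0} ∪ 𝕋`. -/
theorem stmt5 {m k : ℕ} (T : Matrix (Fin m × Fin k) (Fin m × Fin k) ℂ)
    (hT : GoodBlockForm T) :
    IsPartialIsometry T ∧ spectrum ℂ T ⊆ {0} ∪ {z : ℂ | ‖z‖ = 1} := by
  obtain ⟨n, n', hne, hgram⟩ := hT.exists_conjTranspose_mul_self_pow_eq
  exact ⟨hT.isPartialIsometry, spectrum_subset_of_conjTranspose_mul_self_pow_eq hne hgram⟩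
end

section
/- Let S be an irreducible semigroup of complex n×n matrices bounded above in norm by C ≥ 1, and suppose every non-nilpotent element of S has spectral radius 1. Then every nonzero element T of S satisfies ‖T‖ ≥ 1/C². (In particular the nonzero elements of S are uniformly bounded below in norm.) -/
/-!
Since `‖T B‖ ≤ C ‖T‖` for every `B` in `S ∪ {1}`, it suffices to find such a `B` with `T B`
non-nilpotent: then `1 = ρ(T B) ≤ ‖T B‖`, so `‖T‖ ≥ 1 / C ≥ 1 / C²`. If instead the whole right
ideal `T (S ∪ {1})` were nilpotent, take a nonzero `X` of minimal rank in it. For every `Y` in the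
monoid, `X Y X` lies in the ideal and `X Y` is nilpotent, so `X Y` cannot map the range of `X`
onto itself; hence `X Y X` has smaller rank and vanishes. Then the vectors `v` with
`X A v = 0` for all `A` in the monoid form an invariant subspace containing the range of `X` but
not everything, contradicting irreducibility.
-/

open Matrix

/-- The operator norm of a complex matrix acting on `ℂ^n` with the standard
inner product. -/
noncomputable def opNorm {n : ℕ} (T : Matrix (Fin n) (Fin n) ℂ) : ℝ :=
  ‖Matrix.toEuclideanCLM (𝕜 := ℂ) T‖

def Submonoid.insertOne {M : Type*} [Monoid M] (S : Set M) (hS : ∀ a ∈ S, ∀ b ∈ S, a * b ∈ S) :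
    Submonoid M where
  carrier := insert 1 S
  one_mem' := Set.mem_insert _ _
  mul_mem' := by
    rintro a b (rfl | ha) (rfl | hb)
    exacts [.inl (one_mul _), .inr (by simpa using hb), .inr (by simpa using ha),
      .inr (hS a ha b hb)]

namespace Matrix

variable {K : Type*} [Field K] {ι : Type*} [Fintype ι]

def IsIrreducibleSet (S : Set (Matrix ι ι K)) : Prop :=
  ∀ V : Submodule K (ι → K), (∀ T ∈ S, ∀ x ∈ V, T *ᵥ x ∈ V) → V = ⊥ ∨ V = ⊤

theorem IsIrreducibleSet.mono {S S' : Set (Matrix ι ι K)} (hS : IsIrreducibleSet S)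
    (hSS' : S ⊆ S') : IsIrreducibleSet S' :=
  fun V hV => hS V fun T hT => hV T (hSS' hT)

variable [DecidableEq ι]

theorem rank_mul_mul_lt_rank {X Y : Matrix ι ι K} (hXY : IsNilpotent (X * Y)) (hX : X ≠ 0) :
    (X * Y * X).rank < X.rank := by
  by_contra! hle
  set R := LinearMap.range X.mulVecLin
  have hmap : R.map (X * Y).mulVecLin = R := by
    rw [← LinearMap.range_comp, ← mulVecLin_mul]
    refine Submodule.eq_of_le_of_finrank_le ?_ hle
    rw [mul_assoc, mulVecLin_mul]
    exact LinearMap.range_comp_le_range _ _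
  have hpow : ∀ k : ℕ, R.map ((X * Y) ^ k).mulVecLin = R := by
    intro k
    induction k with
    | zero => simp [mulVecLin_one]
    | succ k ih => rw [pow_succ, mulVecLin_mul, Submodule.map_comp, hmap, ih]
  obtain ⟨m, hm⟩ := hXY
  have hR : R = ⊥ := by
    rw [← hpow m, hm, mulVecLin_zero, Submodule.map_zero]
  exact hX (Matrix.toLin'.map_eq_zero_iff.mp (LinearMap.range_eq_bot.mp hR))

theorem IsIrreducibleSet.eq_zero_of_mul_mul_eq_zero {M : Submonoid (Matrix ι ι K)}
    (hM : IsIrreducibleSet (M : Set (Matrix ι ι K))) {X : Matrix ι ι K}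
    (hX : ∀ Y ∈ M, X * Y * X = 0) : X = 0 := by
  set U : Submodule K (ι → K) := ⨅ A ∈ M, LinearMap.ker (X * A).mulVecLin
  have hmemU : ∀ v, v ∈ U ↔ ∀ A ∈ M, (X * A) *ᵥ v = 0 := by
    simp [U, Submodule.mem_iInf]
  have hinv : ∀ T ∈ M, ∀ v ∈ U, T *ᵥ v ∈ U := by
    intro T hT v hv
    rw [hmemU] at hv ⊢
    intro A hA
    rw [mulVec_mulVec, mul_assoc]
    exact hv _ (M.mul_mem hA hT)
  have hrange : ∀ w, X *ᵥ w ∈ U := by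
    intro w
    rw [hmemU]
    intro A hA
    rw [mulVec_mulVec, hX A hA, zero_mulVec]
  rcases hM U hinv with hbot | htop
  · ext i j
    have := hrange (Pi.single j 1)
    rw [hbot, Submodule.mem_bot] at this
    simpa using congrFun this i
  · ext i j
    have := (hmemU (Pi.single j 1)).mp (htop ▸ Submodule.mem_top) 1 M.one_mem
    simpa using congrFun this i

theorem IsIrreducibleSet.exists_not_isNilpotent_mul {M : Submonoid (Matrix ι ι K)}
    (hM : IsIrreducibleSet (M : Set (Matrix ι ι K))) {T : Matrix ι ι K} (hT : T ∈ M)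
    (hT0 : T ≠ 0) : ∃ B ∈ M, ¬ IsNilpotent (T * B) := by
  classical
  by_contra! hnil
  let J : Set (Matrix ι ι K) := {X | ∃ B ∈ M, X = T * B}
  have hJmul : ∀ X ∈ J, ∀ Y ∈ M, X * Y ∈ J := by
    rintro _ ⟨B, hB, rfl⟩ Y hY
    exact ⟨B * Y, M.mul_mem hB hY, mul_assoc _ _ _⟩
  have hJM : J ⊆ M := by
    rintro _ ⟨B, hB, rfl⟩
    exact M.mul_mem hT hB
  have hJnil : ∀ X ∈ J, IsNilpotent X := by
    rintro _ ⟨B, hB, rfl⟩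
    exact hnil B hB
  have hex : ∃ k, ∃ X ∈ J, X ≠ 0 ∧ X.rank = k :=
    ⟨T.rank, T, ⟨1, M.one_mem, (mul_one T).symm⟩, hT0, rfl⟩
  obtain ⟨X, hXJ, hX0, hXrank⟩ := Nat.find_spec hex
  have hXYX : ∀ Y ∈ M, X * Y * X = 0 := by
    intro Y hY
    by_contra hne
    have hmin := Nat.find_min' hex ⟨_, hJmul _ (hJmul X hXJ Y hY) X (hJM hXJ), hne, rfl⟩
    have hlt := rank_mul_mul_lt_rank (hJnil _ (hJmul X hXJ Y hY)) hX0
    omega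
  exact hX0 (hM.eq_zero_of_mul_mul_eq_zero hXYX)

end Matrix

section OpNorm

variable {n : ℕ}

theorem opNorm_mul_le (A B : Matrix (Fin n) (Fin n) ℂ) :
    opNorm (A * B) ≤ opNorm A * opNorm B := by
  unfold opNorm
  rw [_root_.map_mul]
  exact norm_mul_le _ _

theorem opNorm_nonneg (A : Matrix (Fin n) (Fin n) ℂ) : 0 ≤ opNorm A :=
  norm_nonneg _

theorem opNorm_one_le : opNorm (1 : Matrix (Fin n) (Fin n) ℂ) ≤ 1 := by
  unfold opNorm
  rw [_root_.map_one]
  exact ContinuousLinearMap.norm_id_le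

theorem spectralRadius_le_opNorm (A : Matrix (Fin n) (Fin n) ℂ) :
    spectralRadius ℂ A ≤ ENNReal.ofReal (opNorm A) := by
  have hspec : spectralRadius ℂ A = spectralRadius ℂ (Matrix.toEuclideanCLM (𝕜 := ℂ) A) := by
    unfold spectralRadius
    rw [AlgEquiv.spectrum_eq]
  rw [hspec, opNorm, ofReal_norm]
  rcases subsingleton_or_nontrivial (EuclideanSpace ℂ (Fin n)) with h | h
  · simp
  · exact spectrum.spectralRadius_le_nnnorm _

end OpNorm

/-- If `S` is an irreducible semigroup bounded above in norm by `C ≥ 1` in which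
every non-nilpotent element has spectral radius `1`, then every nonzero element
has norm at least `1 / C²`. -/
theorem stmt7 {n : ℕ} (S : Set (Matrix (Fin n) (Fin n) ℂ))
    (hmul : ∀ A ∈ S, ∀ B ∈ S, A * B ∈ S)
    (hirr : ∀ V : Submodule ℂ (Fin n → ℂ),
      (∀ T ∈ S, ∀ x ∈ V, T.mulVec x ∈ V) → V = ⊥ ∨ V = ⊤)
    (C : ℝ) (hC : 1 ≤ C) (habove : ∀ T ∈ S, opNorm T ≤ C)
    (hsr : ∀ T ∈ S, ¬ IsNilpotent T → spectralRadius ℂ T = 1) :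
    ∀ T ∈ S, T ≠ 0 → 1 / C ^ 2 ≤ opNorm T := by
  intro T hT hT0
  set M := Submonoid.insertOne S hmul
  have hM : IsIrreducibleSet (M : Set (Matrix (Fin n) (Fin n) ℂ)) :=
    IsIrreducibleSet.mono hirr (Set.subset_insert 1 S)
  obtain ⟨B, hB, hTB⟩ := hM.exists_not_isNilpotent_mul (Set.mem_insert_of_mem 1 hT) hT0
  have hB_le : opNorm B ≤ C := by
    rcases hB with rfl | hB
    exacts [opNorm_one_le.trans hC, habove B hB]
  have hTB_mem : T * B ∈ S := by
    rcases hB with rfl | hB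
    exacts [by simpa using hT, hmul T hT B hB]
  have hone : 1 ≤ opNorm T * C := calc
    1 ≤ opNorm (T * B) := ENNReal.one_le_ofReal.mp <|
      (hsr _ hTB_mem hTB).symm.le.trans (spectralRadius_le_opNorm _)
    _ ≤ opNorm T * opNorm B := opNorm_mul_le T B
    _ ≤ opNorm T * C := mul_le_mul_of_nonneg_left hB_le (opNorm_nonneg T)
  have hC0 : 0 < C := one_pos.trans_le hC
  calc 1 / C ^ 2 ≤ 1 / C := one_div_le_one_div_of_le hC0 (by nlinarith)
    _ ≤ opNorm T := by rw [div_le_iff₀ hC0]; exact hone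
end

section
/- Levitzki's theorem: Every multiplicative semigroup of complex n×n matrices (n ≥ 1) consisting entirely of nilpotent matrices is triangularizable; in particular, if n ≥ 2 such a semigroup is reducible (has a nontrivial common invariant subspace). -/
/-!
In characteristic zero an endomorphism all of whose powers have trace zero is nilpotent: on the
range of a high power `g = f ^ N` the map `g` is injective, and taking the trace of
Cayley–Hamilton `χ(g) = 0` there gives `χ(0) · dim = 0` with `χ(0) ≠ 0`. Trace is linear and the
linear span of a multiplicative semigroup `S` is closed under products, so every element of the
span of a semigroup of nilpotent maps is nilpotent. The span is in particular a Lie algebra of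
nilpotent endomorphisms, and by Engel's theorem every proper `S`-invariant subspace `W` is strictly
contained in its normalizer, i.e. some `u ∉ W` has `S u ⊆ W`. Adding such vectors one at a time
gives a basis in which `S` is strictly upper triangular; its first vector spans a common invariant
line.
-/

open Module Polynomial

namespace LinearMap

variable {K V : Type*} [Field K] [AddCommGroup V] [Module K V] [FiniteDimensional K V]

theorem trace_eq_trace_restrict_of_forall_mem {f : Module.End K V} {p : Submodule K V}
    (hf : ∀ x, f x ∈ p) :
    trace K V f = trace K p (f.restrict fun x _ ↦ hf x) :=
  trace_comp_comm' (f.codRestrict p hf) p.subtype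

theorem trace_aeval_eq_coeff_zero_mul_finrank {f : Module.End K V}
    (h : ∀ k, 0 < k → trace K V (f ^ k) = 0) (p : K[X]) :
    trace K V (aeval f p) = p.coeff 0 * finrank K V := by
  induction p using Polynomial.induction_on' with
  | add p q hp hq => simp [hp, hq, add_mul]
  | monomial k a =>
    rcases Nat.eq_zero_or_pos k with rfl | hk
    · simp [Algebra.algebraMap_eq_smul_one]
    · simp [Algebra.algebraMap_eq_smul_one, h k hk, coeff_monomial, hk.ne']

theorem finrank_eq_zero_of_injective_of_trace_pow_eq_zero [CharZero K] {f : Module.End K V}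
    (hf : Function.Injective f) (h : ∀ k, 0 < k → trace K V (f ^ k) = 0) :
    finrank K V = 0 := by
  have hc : f.charpoly.coeff 0 ≠ 0 :=
    ((not_hasEigenvalue_zero_tfae f).out 5 2).mp fun m hm ↦ hf (by rw [hm, map_zero])
  have := trace_aeval_eq_coeff_zero_mul_finrank h f.charpoly
  rw [aeval_self_charpoly, map_zero, eq_comm] at this
  exact_mod_cast (mul_eq_zero.mp this).resolve_left hc

theorem isNilpotent_of_trace_pow_eq_zero [CharZero K] (f : Module.End K V)
    (h : ∀ k, 0 < k → trace K V (f ^ k) = 0) : IsNilpotent f := by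
  obtain ⟨N, hN, hdisj⟩ :=
    ((Filter.eventually_ge_atTop 1).and f.eventually_disjoint_ker_pow_range_pow).exists
  set g := f ^ N
  have hg : ∀ x ∈ range g, g x ∈ range g := fun x _ ↦ mem_range_self g x
  have hinj : Function.Injective (g.restrict hg) := by
    refine (injective_iff_map_eq_zero _).mpr fun ⟨x, hx⟩ h0 ↦ Subtype.ext ?_
    exact Submodule.disjoint_def.mp hdisj x (congrArg Subtype.val h0) hx
  have htr : ∀ k, 0 < k → trace K (range g) (g.restrict hg ^ k) = 0 := by
    intro k hk
    obtain ⟨j, rfl⟩ := Nat.exists_eq_add_of_lt hk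
    rw [Module.End.pow_restrict, ← trace_eq_trace_restrict_of_forall_mem, ← pow_mul]
    · exact h _ (by positivity)
    · intro x
      rw [pow_succ', Module.End.mul_apply]
      exact mem_range_self g _
  have := finrank_eq_zero_of_injective_of_trace_pow_eq_zero hinj htr
  exact ⟨N, range_eq_bot.mp (Submodule.finrank_eq_zero.mp this)⟩

end LinearMap

theorem Submodule.mul_mem_span_of_mul_mem {R A : Type*} [CommSemiring R] [Semiring A]
    [Algebra R A] {S : Set A} (hS : ∀ a ∈ S, ∀ b ∈ S, a * b ∈ S) {x y : A}
    (hx : x ∈ span R S) (hy : y ∈ span R S) : x * y ∈ span R S :=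
  span_mono (Set.mul_subset_iff.mpr hS) (span_mul_span R S S ▸ mul_mem_mul hx hy)

theorem Submodule.pow_mem_span_of_mul_mem {R A : Type*} [CommSemiring R] [Semiring A]
    [Algebra R A] {S : Set A} (hS : ∀ a ∈ S, ∀ b ∈ S, a * b ∈ S) {x : A}
    (hx : x ∈ span R S) {k : ℕ} (hk : 0 < k) : x ^ k ∈ span R S := by
  induction k, hk using Nat.le_induction with
  | base => simpa using hx
  | succ k _ ih => exact pow_succ x k ▸ mul_mem_span_of_mul_mem hS ih hx

namespace Module.End

variable {K V : Type*} [Field K] [CharZero K] [AddCommGroup V] [Module K V] [FiniteDimensional K V]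

theorem isNilpotent_of_mem_span_of_mul_mem {S : Set (Module.End K V)}
    (hmul : ∀ a ∈ S, ∀ b ∈ S, a * b ∈ S) (hnil : ∀ a ∈ S, IsNilpotent a) {f : Module.End K V}
    (hf : f ∈ Submodule.span K S) : IsNilpotent f := by
  have htr : Submodule.span K S ≤ LinearMap.ker (LinearMap.trace K V) :=
    Submodule.span_le.mpr fun a ha ↦ (LinearMap.isNilpotent_trace_of_isNilpotent (hnil a ha)).eq_zero
  exact f.isNilpotent_of_trace_pow_eq_zero fun k hk ↦
    htr (Submodule.pow_mem_span_of_mul_mem hmul hf hk)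

end Module.End

theorem LieSubmodule.lt_normalizer_of_ne_top {R L M : Type*} [CommRing R] [LieRing L]
    [LieAlgebra R L] [AddCommGroup M] [Module R M] [LieRingModule L M] [LieModule R L M]
    [LieModule.IsNilpotent L M] {N : LieSubmodule R L M} (hN : N ≠ ⊤) : N < N.normalizer := by
  refine N.le_normalizer.lt_of_ne fun h ↦ hN ?_
  obtain ⟨k, hk⟩ := (LieModule.isNilpotent_iff_exists_ucs_eq_top R (L := L) (M := M)).mp ‹_›
  rw [eq_top_iff, ← hk]
  exact ucs_le_of_normalizer_eq_self h.symm k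

attribute [local instance] LieRing.ofAssociativeRing

namespace LieSubalgebra

variable {K V : Type*} [Field K] [AddCommGroup V] [Module K V] [FiniteDimensional K V]
  {L : LieSubalgebra K (Module.End K V)}

theorem exists_notMem_forall_apply_mem (hL : ∀ x ∈ L, IsNilpotent x) {W : Submodule K V}
    (hW : ∀ x ∈ L, ∀ w ∈ W, x w ∈ W) (hWtop : W ≠ ⊤) : ∃ u ∉ W, ∀ x ∈ L, x u ∈ W := by
  have : LieModule.IsNilpotent L V :=
    (LieModule.isNilpotent_iff_forall' (R := K)).mpr fun x ↦ hL x x.2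
  let N : LieSubmodule K L V := { W with lie_mem := fun {x w} hw ↦ hW x x.2 w hw }
  obtain ⟨u, hu, huN⟩ := SetLike.exists_of_lt (LieSubmodule.lt_normalizer_of_ne_top (N := N)
    (by simpa [N, ← LieSubmodule.toSubmodule_inj] using hWtop))
  exact ⟨u, huN, fun x hx ↦ (LieSubmodule.mem_normalizer N u).mp hu ⟨x, hx⟩⟩

open Submodule in
theorem exists_linearIndependent_forall_apply_mem_span_Iio (hL : ∀ x ∈ L, IsNilpotent x) {k : ℕ}
    (hk : k ≤ finrank K V) : ∃ v : Fin k → V, LinearIndependent K v ∧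
      ∀ x ∈ L, ∀ j, x (v j) ∈ span K (v '' Set.Iio j) := by
  induction k with
  | zero => exact ⟨Fin.elim0, linearIndependent_empty_type, fun _ _ j ↦ j.elim0⟩
  | succ k ih =>
    obtain ⟨v, hv, hvL⟩ := ih (by omega)
    set W := span K (Set.range v)
    have hW : ∀ x ∈ L, ∀ w ∈ W, x w ∈ W := by
      intro x hx w hw
      refine (span_le (p := W.comap x) |>.mpr ?_) hw
      rintro - ⟨j, rfl⟩
      exact span_mono (Set.image_subset_range _ _) (hvL x hx j)
    have hWtop : W ≠ ⊤ := by
      intro h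
      have : finrank K W = k := by simpa using finrank_span_eq_card hv
      rw [h, finrank_top] at this
      omega
    obtain ⟨u, huW, hu⟩ := exists_notMem_forall_apply_mem hL hW hWtop
    refine ⟨Fin.snoc v u, linearIndependent_finSnoc.mpr ⟨hv, huW⟩, fun x hx j ↦ ?_⟩
    induction j using Fin.lastCases with
    | last =>
      rw [Fin.snoc_last]
      refine span_mono ?_ (hu x hx)
      rintro - ⟨i, rfl⟩
      exact ⟨i.castSucc, Fin.castSucc_lt_last i, Fin.snoc_castSucc ..⟩
    | cast j =>
      rw [Fin.snoc_castSucc]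
      refine span_mono ?_ (hvL x hx j)
      rintro - ⟨i, hi, rfl⟩
      exact ⟨i.castSucc, Fin.castSucc_lt_castSucc_iff.mpr hi, Fin.snoc_castSucc ..⟩

theorem exists_basis_forall_apply_mem_span_Iio (hL : ∀ x ∈ L, IsNilpotent x) {n : ℕ}
    (hn : finrank K V = n) :
    ∃ b : Basis (Fin n) K V, ∀ x ∈ L, ∀ j, x (b j) ∈ Submodule.span K (b '' Set.Iio j) := by
  subst hn
  obtain ⟨v, hv, hvL⟩ := exists_linearIndependent_forall_apply_mem_span_Iio hL le_rfl
  refine ⟨basisOfLinearIndependentOfCardEqFinrank' v hv (Fintype.card_fin _), ?_⟩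
  simpa only [coe_basisOfLinearIndependentOfCardEqFinrank'] using hvL

end LieSubalgebra

theorem Module.End.exists_basis_forall_apply_mem_span_Iio_of_mul_mem {K V : Type*} [Field K]
    [CharZero K] [AddCommGroup V] [Module K V] [FiniteDimensional K V] {S : Set (Module.End K V)}
    (hmul : ∀ a ∈ S, ∀ b ∈ S, a * b ∈ S) (hnil : ∀ a ∈ S, IsNilpotent a) {n : ℕ}
    (hn : finrank K V = n) :
    ∃ b : Basis (Fin n) K V, ∀ T ∈ S, ∀ j, T (b j) ∈ Submodule.span K (b '' Set.Iio j) := by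
  obtain ⟨L, hL⟩ := (Submodule.span K S).exists_lieSubalgebra_coe_eq_iff.mpr fun x y hx hy ↦ by
    rw [LieRing.of_associative_ring_bracket]
    exact sub_mem (Submodule.mul_mem_span_of_mul_mem hmul hx hy)
      (Submodule.mul_mem_span_of_mul_mem hmul hy hx)
  have hspan : ∀ x, x ∈ L ↔ x ∈ Submodule.span K S := fun x ↦ by
    rw [← hL, LieSubalgebra.mem_toSubmodule]
  obtain ⟨b, hb⟩ := LieSubalgebra.exists_basis_forall_apply_mem_span_Iio
    (fun x hx ↦ isNilpotent_of_mem_span_of_mul_mem hmul hnil ((hspan x).mp hx)) hn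
  exact ⟨b, fun T hT ↦ hb T ((hspan T).mpr (Submodule.subset_span hT))⟩

theorem LinearMap.isUpperTriangular_toMatrix {R M ι : Type*} [CommRing R] [AddCommGroup M]
    [Module R M] [Fintype ι] [LinearOrder ι] (b : Basis ι R M) {f : M →ₗ[R] M}
    (hf : ∀ j, f (b j) ∈ Submodule.span R (b '' Set.Iio j)) :
    (LinearMap.toMatrix b b f).IsUpperTriangular := by
  intro i j hji
  rw [toMatrix_apply]
  by_contra h
  exact lt_asymm hji (b.repr_support_subset_of_mem_span _ (hf j) (Finsupp.mem_support_iff.mpr h))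

theorem Module.Basis.toMatrix_mul_mul_inv {R ι : Type*} [CommRing R] [Fintype ι] [DecidableEq ι]
    (b : Basis ι R (ι → R)) (T : Matrix ι ι R) :
    b.toMatrix (Pi.basisFun R ι) * T * (b.toMatrix (Pi.basisFun R ι))⁻¹ =
      LinearMap.toMatrix b b (Matrix.toLin' T) := by
  rw [Matrix.inv_eq_right_inv (b.toMatrix_mul_toMatrix_flip _),
    ← basis_toMatrix_mul_linearMap_toMatrix_mul_basis_toMatrix (b' := Pi.basisFun R ι)
      (c' := Pi.basisFun R ι), LinearMap.toMatrix_eq_toMatrix', LinearMap.toMatrix'_toLin']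

theorem Module.Basis.exists_invariant_ne_bot_ne_top {K V : Type*} [Field K] [AddCommGroup V]
    [Module K V] {n : ℕ} (hn : 2 ≤ n) (b : Basis (Fin n) K V) {S : Set (Module.End K V)}
    (hb : ∀ T ∈ S, ∀ j, T (b j) ∈ Submodule.span K (b '' Set.Iio j)) :
    ∃ W : Submodule K V, (∀ T ∈ S, ∀ x ∈ W, T x ∈ W) ∧ W ≠ ⊥ ∧ W ≠ ⊤ := by
  let j₀ : Fin n := ⟨0, by omega⟩
  let j₁ : Fin n := ⟨1, by omega⟩
  refine ⟨K ∙ b j₀, fun T hT x hx ↦ ?_, ?_, fun h ↦ ?_⟩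
  · have hT0 : T (b j₀) = 0 := by simpa [Set.Iio, Fin.lt_def, j₀] using hb T hT j₀
    have : x ∈ LinearMap.ker T := (Submodule.span_singleton_le_iff_mem _ _).mpr hT0 hx
    rw [LinearMap.mem_ker.mp this]
    exact zero_mem _
  · exact Submodule.span_singleton_eq_bot.not.mpr (b.ne_zero j₀)
  · refine b.linearIndependent.notMem_span_image (s := {j₀}) (x := j₁) (by simp [j₀, j₁]) ?_
    rw [Set.image_singleton, h]
    exact Submodule.mem_top

open Matrix

theorem stmt8_general {n : ℕ} (S : Set (Matrix (Fin n) (Fin n) ℂ))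
    (hmul : ∀ A ∈ S, ∀ B ∈ S, A * B ∈ S)
    (hnil : ∀ T ∈ S, IsNilpotent T) :
    (∃ Q : Matrix (Fin n) (Fin n) ℂ, IsUnit Q ∧
      ∀ T ∈ S, ∀ i j : Fin n, j < i → (Q * T * Q⁻¹) i j = 0) ∧
    (2 ≤ n → ∃ V : Submodule ℂ (Fin n → ℂ),
      (∀ T ∈ S, ∀ x ∈ V, T.mulVec x ∈ V) ∧ V ≠ ⊥ ∧ V ≠ ⊤) := by
  obtain ⟨b, hb⟩ := Module.End.exists_basis_forall_apply_mem_span_Iio_of_mul_mem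
    (S := toLin' '' S)
    (by rintro - ⟨A, hA, rfl⟩ - ⟨B, hB, rfl⟩; exact ⟨A * B, hmul A hA B hB, toLin'_mul A B⟩)
    (by rintro - ⟨A, hA, rfl⟩; exact (hnil A hA).map toLinAlgEquiv')
    (Module.finrank_fin_fun ℂ)
  have hbS : ∀ T ∈ S, ∀ j, toLin' T (b j) ∈ Submodule.span ℂ (b '' Set.Iio j) :=
    fun T hT ↦ hb _ ⟨T, hT, rfl⟩
  let Q := b.toMatrix (Pi.basisFun ℂ (Fin n))
  let : Invertible Q := b.invertibleToMatrix _
  refine ⟨⟨Q, isUnit_of_invertible Q, fun T hT i j hji ↦ ?_⟩, fun hn ↦ ?_⟩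
  · rw [b.toMatrix_mul_mul_inv]
    exact LinearMap.isUpperTriangular_toMatrix b (hbS T hT) hji
  · obtain ⟨V, hV, hV₀, hV₁⟩ := b.exists_invariant_ne_bot_ne_top hn hb
    exact ⟨V, fun T hT ↦ hV _ ⟨T, hT, rfl⟩, hV₀, hV₁⟩

/-- Levitzki's theorem: a multiplicative semigroup of nilpotent complex `n × n`
matrices is simultaneously triangularizable; in particular, if `n ≥ 2` it has a
nontrivial common invariant subspace. -/
theorem stmt8 {n : ℕ} (hn : 1 ≤ n) (S : Set (Matrix (Fin n) (Fin n) ℂ))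
    (hmul : ∀ A ∈ S, ∀ B ∈ S, A * B ∈ S)
    (hnil : ∀ T ∈ S, IsNilpotent T) :
    (∃ Q : Matrix (Fin n) (Fin n) ℂ, IsUnit Q ∧
      ∀ T ∈ S, ∀ i j : Fin n, j < i → (Q * T * Q⁻¹) i j = 0) ∧
    (2 ≤ n → ∃ V : Submodule ℂ (Fin n → ℂ),
      (∀ T ∈ S, ∀ x ∈ V, T.mulVec x ∈ V) ∧ V ≠ ⊥ ∧ V ≠ ⊤) :=
  stmt8_general S hmul hnil
end

section
/- Let S be a norm-closed bounded semigroup of complex n×n matrices and T ∈ S with spectral radius r(T) = 1. Then S contains a nonzero idempotent P with range(P) ⊆ range(T) and ker(T) ⊆ ker(P). -/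
open Matrix

open Set
open scoped ENNReal Matrix.Norms.L2Operator

/-!
The closure `K` of the positive powers of `T` is a compact subsemigroup of `S`, so by the
Ellis–Numakura lemma it contains an idempotent `P`. Gelfand's bound `1 = r(T) ≤ ‖T ^ k‖ ^ (1 / k)`
keeps `K` away from `0`, so `P ≠ 0`. Finally, all positive powers of `T` lie in the subspaces
`T * A` and `A * T`, which are closed because they are finite-dimensional, so `P` lies in both;
this gives the inclusions of ranges and kernels.
-/

theorem one_le_norm_pow_succ_of_one_le_spectralRadius {𝕜 A : Type*} [NormedField 𝕜]
    [NormedRing A] [NormedAlgebra 𝕜 A] [CompleteSpace A] [NormOneClass A] {a : A}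
    (ha : 1 ≤ spectralRadius 𝕜 a) (k : ℕ) : 1 ≤ ‖a ^ (k + 1)‖ := by
  have h := ha.trans (spectrum.spectralRadius_le_pow_nnnorm_pow_one_div 𝕜 a k)
  rw [nnnorm_one, ENNReal.coe_one, ENNReal.one_rpow, mul_one] at h
  by_contra! hlt
  have hlt' : (‖a ^ (k + 1)‖₊ : ℝ≥0∞) < 1 := by exact_mod_cast hlt
  exact h.not_gt (ENNReal.rpow_lt_one hlt' (by positivity))

namespace Subsemigroup

variable {M : Type*} [Monoid M]

theorem closure_singleton_subset_range_pow (a : M) :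
    (closure {a} : Set M) ⊆ range fun k : ℕ => a ^ (k + 1) := by
  intro x hx
  induction hx using closure_induction with
  | mem x hx => exact ⟨0, by simpa using hx.symm⟩
  | mul x y _ _ hx hy =>
    obtain ⟨i, rfl⟩ := hx
    obtain ⟨j, rfl⟩ := hy
    exact ⟨i + j + 1, by rw [← pow_add]; ring_nf⟩

theorem topologicalClosure_closure_singleton_subset [TopologicalSpace M] [ContinuousMul M]
    (a : M) {s : Set M} (hs : IsClosed s) (h : ∀ k : ℕ, a ^ (k + 1) ∈ s) :
    ((closure {a}).topologicalClosure : Set M) ⊆ s :=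
  closure_minimal ((closure_singleton_subset_range_pow a).trans (range_subset_iff.2 h)) hs

end Subsemigroup

theorem isClosed_range_mul_left (𝕜 : Type*) {A : Type*} [NontriviallyNormedField 𝕜]
    [CompleteSpace 𝕜] [Ring A] [Algebra 𝕜 A] [TopologicalSpace A] [IsTopologicalAddGroup A]
    [ContinuousSMul 𝕜 A] [T2Space A] [FiniteDimensional 𝕜 A] (a : A) :
    IsClosed (range (a * ·)) :=
  (LinearMap.mulLeft 𝕜 a).range.closed_of_finiteDimensional

theorem isClosed_range_mul_right (𝕜 : Type*) {A : Type*} [NontriviallyNormedField 𝕜]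
    [CompleteSpace 𝕜] [Ring A] [Algebra 𝕜 A] [TopologicalSpace A] [IsTopologicalAddGroup A]
    [ContinuousSMul 𝕜 A] [T2Space A] [FiniteDimensional 𝕜 A] (a : A) :
    IsClosed (range (· * a)) :=
  (LinearMap.mulRight 𝕜 a).range.closed_of_finiteDimensional

theorem exists_idempotent_ne_zero_of_one_le_spectralRadius {𝕜 A : Type*}
    [NontriviallyNormedField 𝕜] [ProperSpace 𝕜] [NormedRing A] [NormedAlgebra 𝕜 A]
    [FiniteDimensional 𝕜 A] [NormOneClass A] {S : Subsemigroup A} (hS : IsClosed (S : Set A))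
    (hSb : Bornology.IsBounded (S : Set A)) {a : A} (haS : a ∈ S)
    (ha : 1 ≤ spectralRadius 𝕜 a) :
    ∃ p ∈ S, p * p = p ∧ p ≠ 0 ∧ p ∈ range (a * ·) ∧ p ∈ range (· * a) := by
  have : CompleteSpace A := FiniteDimensional.complete 𝕜 A
  have : ProperSpace A := FiniteDimensional.proper 𝕜 A
  set L := Subsemigroup.closure {a}
  have hLS : L.topologicalClosure ≤ S :=
    L.topologicalClosure_minimal ((Subsemigroup.closure_singleton_le_iff_mem a S).2 haS) hS
  have hLc : IsCompact (L.topologicalClosure : Set A) :=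
    (Metric.isCompact_of_isClosed_isBounded hS hSb).of_isClosed_subset
      L.isClosed_topologicalClosure hLS
  obtain ⟨p, hpK, hpp⟩ := exists_idempotent_in_compact_subsemigroup continuous_mul_const
    _ ⟨a, L.le_topologicalClosure (Subsemigroup.subset_closure rfl)⟩ hLc
    fun _ hx _ hy => L.topologicalClosure.mul_mem hx hy
  refine ⟨p, hLS hpK, hpp, ?_, ?_, ?_⟩
  · have hnorm := Subsemigroup.topologicalClosure_closure_singleton_subset a
      (isClosed_le continuous_const continuous_norm)
      (one_le_norm_pow_succ_of_one_le_spectralRadius ha) hpK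
    exact norm_pos_iff.1 (one_pos.trans_le hnorm)
  · exact Subsemigroup.topologicalClosure_closure_singleton_subset a
      (isClosed_range_mul_left 𝕜 a) (fun k => ⟨a ^ k, (pow_succ' a k).symm⟩) hpK
  · exact Subsemigroup.topologicalClosure_closure_singleton_subset a
      (isClosed_range_mul_right 𝕜 a) (fun k => ⟨a ^ k, (pow_succ a k).symm⟩) hpK

namespace Matrix

variable {R l m n : Type*} [CommSemiring R] [Fintype m] [Fintype n]

theorem range_mulVecLin_mul_le (A : Matrix l m R) (B : Matrix m n R) :
    LinearMap.range (A * B).mulVecLin ≤ LinearMap.range A.mulVecLin := by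
  rw [mulVecLin_mul]
  exact LinearMap.range_comp_le_range _ _

theorem ker_mulVecLin_le_mul (A : Matrix l m R) (B : Matrix m n R) :
    LinearMap.ker B.mulVecLin ≤ LinearMap.ker (A * B).mulVecLin := by
  rw [mulVecLin_mul]
  exact LinearMap.ker_le_ker_comp _ _

end Matrix

/-- A norm-closed bounded matrix semigroup containing an element `T` of spectral
radius `1` contains a nonzero idempotent `P` with `range P ⊆ range T` and
`ker T ⊆ ker P`. -/
theorem stmt9 {n : ℕ} (S : Set (Matrix (Fin n) (Fin n) ℂ))
    (hmul : ∀ A ∈ S, ∀ B ∈ S, A * B ∈ S)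
    (hclosed : IsClosed S)
    (hbdd : ∃ C : ℝ, ∀ T ∈ S, opNorm T ≤ C)
    (T : Matrix (Fin n) (Fin n) ℂ) (hT : T ∈ S)
    (hr : spectralRadius ℂ T = 1) :
    ∃ P ∈ S, P * P = P ∧ P ≠ 0 ∧
      LinearMap.range P.mulVecLin ≤ LinearMap.range T.mulVecLin ∧
      LinearMap.ker T.mulVecLin ≤ LinearMap.ker P.mulVecLin := by
  have : Nontrivial (Matrix (Fin n) (Fin n) ℂ) :=
    not_subsingleton_iff_nontrivial.1 fun _ => by simp at hr
  let S' : Subsemigroup (Matrix (Fin n) (Fin n) ℂ) :=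
    { carrier := S, mul_mem' := fun ha hb => hmul _ ha _ hb }
  -- With the scoped L2 instances, `‖A‖` on matrices is `opNorm A` by definition.
  obtain ⟨P, hPS, hPP, hP0, ⟨X, rfl⟩, ⟨Y, hY : Y * T = T * X⟩⟩ :=
    exists_idempotent_ne_zero_of_one_le_spectralRadius (S := S') hclosed
      (isBounded_iff_forall_norm_le.2 hbdd) hT hr.ge
  exact ⟨T * X, hPS, hPP, hP0, T.range_mulVecLin_mul_le X, hY ▸ Y.ker_mulVecLin_le_mul T⟩
end

section
/- With t > 0 irrational and S the semigroup {[[e^{int},0],[e^{imt},0]], [[0,e^{int}],[0,e^{imt}]] : n,m ∈ ℕ⁺} of 2×2 matrices, the norm closure of S contains the matrices [[1,0],[1,0]] and [[0,1],[0,1]], which are non-commuting idempotents. Hence the closure of S contains idempotents that do not commute. -/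
/-!
Dirichlet's approximation theorem applied to `t / (2π)` gives positive integers `n` with `n t`
arbitrarily close to `2πℤ`, so `1` is a limit of the `e^{int}` with `n > 0`. Taking `n = m`, the
matrices `[[z,0],[z,0]]` and `[[0,z],[0,z]]` with `z = e^{int}` lie in `S` and converge to the two
idempotents; that these do not commute is a direct computation.
-/

open Matrix

/-- The semigroup of Example 2 of the paper: matrices
`[[e^{int}, 0], [e^{imt}, 0]]` and `[[0, e^{int}], [0, e^{imt}]]`
with `n, m` positive integers. -/
def Sexample (t : ℝ) : Set (Matrix (Fin 2) (Fin 2) ℂ) :=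
  {M | ∃ n m : ℕ, 0 < n ∧ 0 < m ∧
    (M = !![Complex.exp (Complex.I * n * t), 0;
            Complex.exp (Complex.I * m * t), 0] ∨
     M = !![0, Complex.exp (Complex.I * n * t);
            0, Complex.exp (Complex.I * m * t)])}

open Complex Real

theorem exists_pos_nat_norm_exp_I_mul_sub_one_le (t : ℝ) {N : ℕ} (hN : 0 < N) :
    ∃ n : ℕ, 0 < n ∧ ‖exp (I * n * t) - 1‖ ≤ 2 * π / (N + 1) := by
  obtain ⟨n, hn, -, hdir⟩ := exists_nat_abs_mul_sub_round_le (t / (2 * π)) hN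
  refine ⟨n, hn, ?_⟩
  set r := round (n * (t / (2 * π)))
  have hshift : exp (I * n * t) = exp (I * ↑(n * t - r * (2 * π))) := by
    rw [show I * ↑(n * t - r * (2 * π)) = I * n * t - r * (2 * π * I) by push_cast; ring,
      Complex.exp_sub, exp_int_mul_two_pi_mul_I, div_one]
  have hclose : |n * t - r * (2 * π)| ≤ 2 * π / (N + 1) := by
    have : n * t - r * (2 * π) = 2 * π * (n * (t / (2 * π)) - r) := by field_simp
    rw [this, abs_mul, abs_of_pos two_pi_pos]
    exact (mul_le_mul_of_nonneg_left hdir two_pi_pos.le).trans_eq (mul_one_div _ _)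
  rw [hshift]
  exact norm_exp_I_mul_ofReal_sub_one_le.trans hclose

theorem one_mem_closure_exp_I_mul_nat (t : ℝ) :
    (1 : ℂ) ∈ closure ((fun n : ℕ => exp (I * n * t)) '' Set.Ioi 0) := by
  refine Metric.mem_closure_iff.2 fun ε hε => ?_
  obtain ⟨N, hN⟩ := exists_nat_gt (2 * π / ε)
  have hNpos : 0 < N := by exact_mod_cast (div_pos two_pi_pos hε).trans hN
  obtain ⟨n, hn, hle⟩ := exists_pos_nat_norm_exp_I_mul_sub_one_le t hNpos
  refine ⟨_, ⟨n, hn, rfl⟩, ?_⟩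
  rw [dist_comm, dist_eq_norm]
  refine hle.trans_lt ?_
  rw [div_lt_iff₀ hε] at hN
  rw [div_lt_iff₀ (by positivity)]
  nlinarith

theorem stmt16_general (t : ℝ) :
    (!![(1 : ℂ), 0; 1, 0] ∈ closure (Sexample t)) ∧
    (!![(0 : ℂ), 1; 0, 1] ∈ closure (Sexample t)) ∧
    !![(1 : ℂ), 0; 1, 0] * !![(1 : ℂ), 0; 1, 0] = !![(1 : ℂ), 0; 1, 0] ∧
    !![(0 : ℂ), 1; 0, 1] * !![(0 : ℂ), 1; 0, 1] = !![(0 : ℂ), 1; 0, 1] ∧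
    !![(1 : ℂ), 0; 1, 0] * !![(0 : ℂ), 1; 0, 1] ≠
      !![(0 : ℂ), 1; 0, 1] * !![(1 : ℂ), 0; 1, 0] := by
  have hone := one_mem_closure_exp_I_mul_nat t
  refine ⟨?_, ?_, by simp, by simp, by simp⟩
  · refine map_mem_closure (f := fun z : ℂ => !![z, 0; z, 0]) (by fun_prop) hone ?_
    rintro _ ⟨n, hn, rfl⟩
    exact ⟨n, n, hn, hn, Or.inl rfl⟩
  · refine map_mem_closure (f := fun z : ℂ => !![0, z; 0, z]) (by fun_prop) hone ?_
    rintro _ ⟨n, hn, rfl⟩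
    exact ⟨n, n, hn, hn, Or.inr rfl⟩

/-- For irrational `t > 0`, the (norm) closure of `Sexample t` contains the
idempotents `[[1,0],[1,0]]` and `[[0,1],[0,1]]`, which do not commute. -/
theorem stmt16 (t : ℝ) (ht : 0 < t) (hirrat : Irrational t) :
    (!![(1 : ℂ), 0; 1, 0] ∈ closure (Sexample t)) ∧
    (!![(0 : ℂ), 1; 0, 1] ∈ closure (Sexample t)) ∧
    !![(1 : ℂ), 0; 1, 0] * !![(1 : ℂ), 0; 1, 0] = !![(1 : ℂ), 0; 1, 0] ∧
    !![(0 : ℂ), 1; 0, 1] * !![(0 : ℂ), 1; 0, 1] = !![(0 : ℂ), 1; 0, 1] ∧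
    !![(1 : ℂ), 0; 1, 0] * !![(0 : ℂ), 1; 0, 1] ≠
      !![(0 : ℂ), 1; 0, 1] * !![(1 : ℂ), 0; 1, 0] :=
  stmt16_general t
end
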